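/- arXiv:1309.2512 — 2 statements merged into one kernel-verified Lean document; each statement's English description precedes it below -/
import Mathlib

section
/- If x is an element of the n-th level A_n of the adjunctive hierarchy, then the cardinality of x is at most n, x is a subset of A_{n-1}, and every subset of x also belongs to A_n. -/
open ZFSet Finset

noncomputable section

abbrev HFSet := ZFSet.{0}

/-- The adjunctive hierarchy of hereditarily finite sets. -/
def A : ℕ → Set HFSet
  | 0 => {∅}
  | n + 1 => {∅} ∪ {z | ∃ x ∈ A n, ∃ y ∈ A n, z = insert y x}

/-- Integer-indexed version, with `A n = ∅` for `n < 0`. -/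
def Az (n : ℤ) : Set HFSet := if 0 ≤ n then A n.toNat else ∅

/-- The cumulative hierarchy (von Neumann) of hereditarily finite sets. -/
def W : ℕ → HFSet
  | 0 => ∅
  | n + 1 => ZFSet.powerset (W n)

/-- A ZF set is hereditarily finite if it lies in some finite level of the
cumulative hierarchy. -/
def IsHF (x : HFSet) : Prop := ∃ n, x ∈ W n

/-- The adjunctive rank. -/
def ark (x : HFSet) : ℕ := sInf {n | x ∈ A n}

/-- The (von Neumann) rank of a hereditarily finite set. -/
def rk (x : HFSet) : ℕ := sInf {n | x ∈ W (n + 1)}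

/-- `B n m` = sets in `A n \ A (n-1)` all of whose elements lie in `A m`. -/
def B (n m : ℤ) : Set HFSet :=
  {x | x ∈ Az n ∧ x ∉ Az (n - 1) ∧ ∀ y, y ∈ x → y ∈ Az m}

def b (n m : ℤ) : ℕ := (B n m).ncard

def a (n : ℕ) : ℕ := (A n).ncard

def c (n : ℕ) : ℕ := (Az n \ Az ((n : ℤ) - 1)).ncard


lemma empty_mem_A (n : ℕ) : (∅ : HFSet) ∈ A n := by
  cases n with
  | zero => simp [A]
  | succ n => left; rfl

lemma A_mono (n : ℕ) : A n ⊆ A (n + 1) := by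
  induction n with
  | zero =>
    intro x hx
    rw [A] at hx; rw [Set.mem_singleton_iff] at hx
    subst hx; exact empty_mem_A 1
  | succ n ih =>
    intro x hx
    rcases hx with hx | ⟨w, hw, y, hy, rfl⟩
    · exact Or.inl hx
    · exact Or.inr ⟨w, ih hw, y, ih hy, rfl⟩

lemma Az_pred_sub (n : ℕ) : Az ((n : ℤ) - 1) ⊆ A n := by
  cases n with
  | zero => intro x hx; simp [Az] at hx
  | succ n =>
    intro x hx
    have h : ((n : ℤ) + 1 - 1) = (n : ℤ) := by ring
    simp only [Nat.cast_succ, h, Az, if_pos (Int.ofNat_nonneg n), Int.toNat_natCast] at hx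
    exact A_mono n hx

theorem stmt0 (n : ℕ) (x : HFSet) (hx : x ∈ A n) :
    x.toSet.ncard ≤ n ∧ (∀ y, y ∈ x → y ∈ Az ((n : ℤ) - 1)) ∧
      ∀ y : HFSet, y ⊆ x → y ∈ A n := by
  induction n generalizing x with
  | zero =>
    rw [A] at hx; rw [Set.mem_singleton_iff] at hx
    subst hx
    refine ⟨by simp [show toSet (∅ : HFSet) = ∅ from ZFSet.coe_empty], ?_, ?_⟩
    · intro y hy; exact absurd hy (ZFSet.notMem_empty y)
    · intro y hy
      have : y = ∅ := (ZFSet.eq_empty y).mpr fun a ha => ZFSet.notMem_empty a (hy ha)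
      subst this; exact rfl
  | succ n ih =>
    have hAz : Az ((n : ℤ) + 1 - 1) = A n := by
      have h : ((n : ℤ) + 1 - 1) = (n : ℤ) := by ring
      simp [Az, h]
    rcases hx with hx | ⟨w, hw, z, hz, rfl⟩
    · rw [Set.mem_singleton_iff] at hx
      subst hx
      refine ⟨by simp [show toSet (∅ : HFSet) = ∅ from ZFSet.coe_empty], ?_, ?_⟩
      · intro y hy; exact absurd hy (ZFSet.notMem_empty y)
      · intro y hy
        have : y = ∅ := (ZFSet.eq_empty y).mpr fun a ha => ZFSet.notMem_empty a (hy ha)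
        subst this; exact empty_mem_A _
    · obtain ⟨hcard, helem, hsub⟩ := ih w hw
      refine ⟨?_, ?_, ?_⟩
      · calc (insert z w).toSet.ncard = (insert z w.toSet).ncard := by
              congr 1; ext a; simp [ZFSet.mem_insert_iff, show ∀ s a : HFSet, a ∈ s.toSet ↔ a ∈ s from fun _ _ => Iff.rfl]
          _ ≤ w.toSet.ncard + 1 := Set.ncard_insert_le _ _
          _ ≤ n + 1 := by omega
      · intro y hy
        push_cast
        rw [hAz]
        rw [ZFSet.mem_insert_iff] at hy
        rcases hy with rfl | hy
        · exact hz
        · exact Az_pred_sub n (helem y hy)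
      · intro y hy
        set y' := ZFSet.sep (fun a => a ≠ z) y with hy'def
        have hy'sub : y' ⊆ w := by
          intro a ha
          rw [hy'def, ZFSet.mem_sep] at ha
          obtain ⟨ha, hane⟩ := ha
          have := hy ha
          rw [ZFSet.mem_insert_iff] at this
          rcases this with rfl | h
          · exact absurd rfl hane
          · exact h
        have hy' : y' ∈ A n := hsub y' hy'sub
        by_cases hzy : z ∈ y
        · have heq : y = insert z y' := by
            apply ZFSet.ext
            intro a
            rw [ZFSet.mem_insert_iff, hy'def, ZFSet.mem_sep]
            constructor
            · intro ha
              by_cases haz : a = z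
              · exact Or.inl haz
              · exact Or.inr ⟨ha, haz⟩
            · rintro (rfl | ⟨ha, _⟩)
              · exact hzy
              · exact ha
          rw [heq]
          exact Or.inr ⟨y', hy', z, hz, rfl⟩
        · have heq : y = y' := by
            apply ZFSet.ext
            intro a
            rw [hy'def, ZFSet.mem_sep]
            constructor
            · intro ha
              refine ⟨ha, ?_⟩
              rintro rfl; exact hzy ha
            · exact fun h => h.1
          rw [heq]
          exact A_mono n hy'
end
end

section
/- There exists a real constant C > 1 such that c_n = C^{2^n} + O(C^{2^{n-1}}), i.e., |c_n − C^{2^n}| ≤ K · C^{2^{n-1}} for some constant K and all n. -/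
open ZFSet Finset

noncomputable section

lemma mem_A_succ_of (n : ℕ) {x y : HFSet} (hx : x ∈ A n) (hy : y ∈ A n) :
    insert y x ∈ A (n + 1) :=
  Or.inr ⟨x, hx, y, hy, rfl⟩

lemma A_subset_of_le {m n : ℕ} (h : m ≤ n) : A m ⊆ A n := by
  induction h with
  | refl => exact subset_rfl
  | step h ih => exact ih.trans (A_mono _)

lemma mem_A_of_mem_mem {n : ℕ} {x y : HFSet} (hx : x ∈ A (n + 1)) (hy : y ∈ x) :
    y ∈ A n := by
  induction n generalizing x y with
  | zero =>
    rcases hx with rfl | ⟨w, rfl, v, rfl, rfl⟩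
    · exact absurd hy (ZFSet.notMem_empty y)
    · rcases ZFSet.mem_insert_iff.1 hy with rfl | h
      · exact rfl
      · exact absurd h (ZFSet.notMem_empty y)
  | succ n ih =>
    rcases hx with rfl | ⟨w, hw, v, hv, rfl⟩
    · exact absurd hy (ZFSet.notMem_empty y)
    · rcases ZFSet.mem_insert_iff.1 hy with rfl | h
      · exact hv
      · exact A_mono n (ih hw h)

lemma A_subset_closed : ∀ (n : ℕ) (x s : HFSet), x ∈ A n → s ⊆ x → s ∈ A n := by
  intro n
  induction n with
  | zero =>
    rintro x s rfl hs
    have : s = ∅ := (ZFSet.eq_empty s).2 fun z hz => ZFSet.notMem_empty z (hs hz)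
    exact this ▸ rfl
  | succ n ih =>
    rintro x s hx hs
    rcases hx with rfl | ⟨w, hw, v, hv, rfl⟩
    · left; exact (ZFSet.eq_empty s).2 fun z hz => ZFSet.notMem_empty z (hs hz)
    · have hsub : s \ {v} ⊆ w := by
        intro z hz
        rcases ZFSet.mem_sdiff.1 hz with ⟨hz1, hz2⟩
        rcases ZFSet.mem_insert_iff.1 (hs hz1) with rfl | h
        · exact absurd (ZFSet.mem_singleton.2 rfl) hz2
        · exact h
      have hmem : s \ {v} ∈ A n := ih w (s \ {v}) hw hsub
      by_cases hv' : v ∈ s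
      · have : s = insert v (s \ {v}) := by
          apply ZFSet.ext
          intro z
          simp only [ZFSet.mem_insert_iff, ZFSet.mem_sdiff, ZFSet.mem_singleton]
          constructor
          · intro hz
            by_cases hzv : z = v
            · exact Or.inl hzv
            · exact Or.inr ⟨hz, by simpa using hzv⟩
          · rintro (rfl | ⟨hz, _⟩)
            · exact hv'
            · exact hz
        rw [this]
        exact mem_A_succ_of _ hmem hv
      · have : s = s \ {v} := by
          apply ZFSet.ext
          intro z
          simp only [ZFSet.mem_sdiff, ZFSet.mem_singleton]
          constructor
          · intro hz
            refine ⟨hz, fun h => hv' (h ▸ hz)⟩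
          · exact fun h => h.1
        rw [this]
        exact A_mono n hmem

lemma mem_A_succ_iff {n : ℕ} {z : HFSet} :
    z ∈ A (n + 1) ↔ z = ∅ ∨ ∃ y, y ∈ z ∧ y ∈ A n ∧ z \ {y} ∈ A n := by
  constructor
  · intro hz
    rcases hz with rfl | ⟨w, hw, v, hv, rfl⟩
    · exact Or.inl rfl
    · refine Or.inr ⟨v, ZFSet.mem_insert v w, hv, ?_⟩
      refine A_subset_closed n w _ hw ?_
      intro u hu
      rcases ZFSet.mem_sdiff.1 hu with ⟨hu1, hu2⟩
      rcases ZFSet.mem_insert_iff.1 hu1 with rfl | h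
      · exact absurd (ZFSet.mem_singleton.2 rfl) hu2
      · exact h
  · rintro (rfl | ⟨y, hy, hyA, hmem⟩)
    · exact empty_mem_A _
    · have : z = insert y (z \ {y}) := by
        apply ZFSet.ext
        intro u
        simp only [ZFSet.mem_insert_iff, ZFSet.mem_sdiff, ZFSet.mem_singleton]
        constructor
        · intro hu
          by_cases huy : u = y
          · exact Or.inl huy
          · exact Or.inr ⟨hu, huy⟩
        · rintro (rfl | ⟨hu, _⟩)
          · exact hy
          · exact hu
      rw [this]
      exact mem_A_succ_of _ hmem hyA

lemma A_finite (n : ℕ) : (A n).Finite := by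
  induction n with
  | zero => exact Set.finite_singleton _
  | succ n ih =>
    have : {z : HFSet | ∃ x ∈ A n, ∃ y ∈ A n, z = insert y x}
        = (fun p : HFSet × HFSet => insert p.2 p.1) '' (A n ×ˢ A n) := by
      ext z
      simp only [Set.mem_image, Set.mem_prod, Set.mem_setOf_eq, Prod.exists]
      constructor
      · rintro ⟨x, hx, y, hy, rfl⟩; exact ⟨x, y, ⟨hx, hy⟩, rfl⟩
      · rintro ⟨x, y, ⟨hx, hy⟩, rfl⟩; exact ⟨x, hx, y, hy, rfl⟩
    rw [A, this]
    exact (Set.finite_singleton _).union (((ih.prod ih)).image _)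

lemma Az_coe (n : ℕ) : Az n = A n := by simp [Az]

lemma c_succ (n : ℕ) : c (n + 1) = (A (n + 1) \ A n).ncard := by
  rw [c, show (((n + 1 : ℕ)) : ℤ) - 1 = ((n : ℕ) : ℤ) by push_cast; ring,
    Az_coe, Az_coe]

lemma A_zero_eq' : A 0 = ({∅} : Set HFSet) := rfl

lemma c_zero : c 0 = 1 := by
  rw [c]
  simp only [Nat.cast_zero, zero_sub]
  rw [show Az 0 = A 0 from Az_coe 0, show Az (-1) = ∅ from by simp [Az],
    Set.diff_empty, A_zero_eq', Set.ncard_singleton]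

lemma A_zero_eq : A 0 = ({∅} : Set HFSet) := rfl

lemma singleton_empty_ne_empty : ({∅} : HFSet) ≠ ∅ := by
  intro h
  have : (∅ : HFSet) ∈ ({∅} : HFSet) := ZFSet.mem_singleton.2 rfl
  rw [h] at this
  exact ZFSet.notMem_empty _ this

lemma A_one_eq : A 1 = ({∅, ({∅} : HFSet)} : Set HFSet) := by
  ext z
  simp only [A, Set.mem_union, Set.mem_singleton_iff, Set.mem_setOf_eq, Set.mem_insert_iff]
  constructor
  · rintro (rfl | ⟨x, rfl, y, rfl, rfl⟩)
    · exact Or.inl rfl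
    · right
      apply ZFSet.ext
      intro u
      simp [ZFSet.mem_insert_iff]
  · rintro (rfl | rfl)
    · exact Or.inl rfl
    · exact Or.inr ⟨∅, rfl, ∅, rfl, rfl⟩

lemma c_one : c 1 = 1 := by
  rw [c_succ 0, A_one_eq, A_zero_eq]
  have : ({∅, ({∅} : HFSet)} : Set HFSet) \ {∅} = {({∅} : HFSet)} := by
    ext z
    simp only [Set.mem_diff, Set.mem_insert_iff, Set.mem_singleton_iff]
    constructor
    · rintro ⟨rfl | rfl, h2⟩
      · exact absurd rfl h2
      · rfl
    · rintro rfl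
      exact ⟨Or.inr rfl, singleton_empty_ne_empty⟩
  rw [this, Set.ncard_singleton]

lemma a_one_le : a 1 ≤ 2 := by
  rw [a, A_one_eq]
  exact (Set.ncard_insert_le _ _).trans (by simp)

lemma a_zero : a 0 = 1 := by rw [a, A_zero_eq, Set.ncard_singleton]

lemma two_le_c_two : 2 ≤ c 2 := by
  rw [c_succ 1]
  set z1 : HFSet := ({({∅} : HFSet)} : HFSet) with hz1
  set z2 : HFSet := insert ({∅} : HFSet) ({∅} : HFSet) with hz2
  have hmem1 : ({∅} : HFSet) ∈ z1 := ZFSet.mem_singleton.2 rfl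
  have hmem2 : ({∅} : HFSet) ∈ z2 := ZFSet.mem_insert _ _
  have hsne : ∀ w : HFSet, ({∅} : HFSet) ∈ w → w ∈ A 1 → False := by
    intro w hw hwA
    rw [A_one_eq] at hwA
    rcases hwA with rfl | rfl
    · exact ZFSet.notMem_empty _ hw
    · exact singleton_empty_ne_empty (ZFSet.mem_singleton.1 hw)
  have h1 : z1 ∈ A 2 \ A 1 := by
    constructor
    · have : z1 = insert ({∅} : HFSet) ∅ := rfl
      rw [this]
      exact mem_A_succ_of 1 (by rw [A_one_eq]; exact Or.inl rfl)
        (by rw [A_one_eq]; exact Or.inr rfl)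
    · exact fun h => hsne z1 hmem1 h
  have h2 : z2 ∈ A 2 \ A 1 := by
    constructor
    · exact mem_A_succ_of 1 (by rw [A_one_eq]; exact Or.inr rfl)
        (by rw [A_one_eq]; exact Or.inr rfl)
    · exact fun h => hsne z2 hmem2 h
  have hne : z1 ≠ z2 := by
    intro h
    have : (∅ : HFSet) ∈ z2 := ZFSet.mem_insert_of_mem _ (ZFSet.mem_singleton.2 rfl)
    rw [← h] at this
    exact singleton_empty_ne_empty ((ZFSet.mem_singleton.1 this).symm)
  calc 2 = ({z1, z2} : Set HFSet).ncard := (Set.ncard_pair hne).symm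
    _ ≤ (A 2 \ A 1).ncard := by
        apply Set.ncard_le_ncard
        · intro u hu
          rcases hu with rfl | rfl
          · exact h1
          · exact h2
        · exact (A_finite 2).diff

lemma ncard_prod {α β : Type*} (s : Set α) (t : Set β) :
    (s ×ˢ t).ncard = s.ncard * t.ncard := by
  rw [← Nat.card_coe_set_eq, ← Nat.card_coe_set_eq, ← Nat.card_coe_set_eq,
    ← Nat.card_prod]
  exact Nat.card_congr (Equiv.Set.prod s t).symm |>.symm

lemma a_rec (n : ℕ) : a (n + 1) = c (n + 1) + a n := by
  rw [a, a, c_succ]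
  have := Set.ncard_diff_add_ncard (A (n + 1)) (A n) (A_finite _) (A_finite _)
  rw [Set.union_eq_self_of_subset_right (A_mono n)] at this
  omega

lemma insert_diff_self' {y z : HFSet} (hy : y ∈ z) : insert y (z \ {y}) = z := by
  apply ZFSet.ext
  intro u
  simp only [ZFSet.mem_insert_iff, ZFSet.mem_sdiff, ZFSet.mem_singleton]
  constructor
  · rintro (rfl | ⟨hu, _⟩)
    · exact hy
    · exact hu
  · intro hu
    by_cases huy : u = y
    · exact Or.inl huy
    · exact Or.inr ⟨hu, huy⟩

lemma key_lower : ∀ n : ℕ, c n * c n ≤ c (n + 1) := by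
  intro n
  cases n with
  | zero => rw [c_zero, c_one]
  | succ m =>
    set D : Set HFSet := A (m + 1) \ A m with hD
    set g : HFSet × HFSet → HFSet := fun p => insert p.1 p.2 with hg
    have himg : g '' (D ×ˢ D) ⊆ A (m + 2) \ A (m + 1) := by
      rintro z ⟨⟨x, y⟩, ⟨⟨hxA, hxn⟩, ⟨hyA, hyn⟩⟩, rfl⟩
      constructor
      · exact mem_A_succ_of (m + 1) hyA hxA
      · intro hmem
        exact hxn (mem_A_of_mem_mem hmem (ZFSet.mem_insert _ _))
    have hinj : Set.InjOn g (D ×ˢ D) := by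
      rintro ⟨x, y⟩ ⟨⟨hxA, hxn⟩, ⟨hyA, hyn⟩⟩ ⟨x', y'⟩ ⟨⟨hxA', hxn'⟩, ⟨hyA', hyn'⟩⟩ heq
      simp only [hg] at heq
      have hxx : x = x' := by
        have hx'mem : x' ∈ insert x y := by rw [heq]; exact ZFSet.mem_insert _ _
        rcases ZFSet.mem_insert_iff.1 hx'mem with h | h
        · exact h.symm
        · exact absurd (mem_A_of_mem_mem hyA h) hxn'
      subst hxx
      have hyy : y = y' := by
        apply ZFSet.ext
        intro u
        constructor
        · intro hu
          have : u ∈ insert x y' := by rw [← heq]; exact ZFSet.mem_insert_of_mem _ hu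
          rcases ZFSet.mem_insert_iff.1 this with rfl | h
          · exact absurd (mem_A_of_mem_mem hyA hu) hxn
          · exact h
        · intro hu
          have : u ∈ insert x y := by rw [heq]; exact ZFSet.mem_insert_of_mem _ hu
          rcases ZFSet.mem_insert_iff.1 this with rfl | h
          · exact absurd (mem_A_of_mem_mem hyA' hu) hxn
          · exact h
      rw [hyy]
    calc c (m + 1) * c (m + 1) = (D ×ˢ D).ncard := by
          rw [ncard_prod, c_succ]
      _ = (g '' (D ×ˢ D)).ncard := (Set.ncard_image_of_injOn hinj).symm
      _ ≤ (A (m + 2) \ A (m + 1)).ncard :=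
          Set.ncard_le_ncard himg ((A_finite _).diff)
      _ = c (m + 2) := (c_succ (m + 1)).symm

lemma key_upper : ∀ m : ℕ, c (m + 2) ≤ c (m + 1) * c (m + 1) + 2 * a m * c (m + 1) := by
  intro m
  set D : Set HFSet := A (m + 1) \ A m with hD
  set E : Set HFSet := A m with hE
  set g : HFSet × HFSet → HFSet := fun p => insert p.1 p.2 with hg
  have hcover : A (m + 2) \ A (m + 1) ⊆
      g '' (D ×ˢ D) ∪ g '' (D ×ˢ E) ∪ g '' (E ×ˢ D) := by
    rintro z ⟨hzA, hzn⟩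
    rcases mem_A_succ_iff.1 hzA with rfl | ⟨y, hyz, hyA, hxA⟩
    · exact absurd (empty_mem_A (m + 1)) hzn
    · set x : HFSet := z \ {y} with hx
      have hzx : g (y, x) = z := insert_diff_self' hyz
      by_cases hyE : y ∈ A m
      · by_cases hxE : x ∈ A m
        · exfalso
          exact hzn (hzx ▸ mem_A_succ_of m hxE hyE)
        · exact Or.inr ⟨(y, x), ⟨hyE, hxA, hxE⟩, hzx⟩
      · by_cases hxE : x ∈ A m
        · exact Or.inl (Or.inr ⟨(y, x), ⟨⟨hyA, hyE⟩, hxE⟩, hzx⟩)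
        · exact Or.inl (Or.inl ⟨(y, x), ⟨⟨hyA, hyE⟩, hxA, hxE⟩, hzx⟩)
  have hDfin : D.Finite := (A_finite _).diff
  have hEfin : E.Finite := A_finite _
  calc c (m + 2) = (A (m + 2) \ A (m + 1)).ncard := c_succ (m + 1)
    _ ≤ (g '' (D ×ˢ D) ∪ g '' (D ×ˢ E) ∪ g '' (E ×ˢ D)).ncard :=
        Set.ncard_le_ncard hcover
          ((((hDfin.prod hDfin).image _).union ((hDfin.prod hEfin).image _)).union
          ((hEfin.prod hDfin).image _))
    _ ≤ (g '' (D ×ˢ D) ∪ g '' (D ×ˢ E)).ncard + (g '' (E ×ˢ D)).ncard :=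
        Set.ncard_union_le _ _
    _ ≤ (g '' (D ×ˢ D)).ncard + (g '' (D ×ˢ E)).ncard + (g '' (E ×ˢ D)).ncard := by
        exact Nat.add_le_add_right (Set.ncard_union_le _ _) _
    _ ≤ (D ×ˢ D).ncard + (D ×ˢ E).ncard + (E ×ˢ D).ncard := by
        gcongr
        · exact Set.ncard_image_le (hDfin.prod hDfin)
        · exact Set.ncard_image_le (hDfin.prod hEfin)
        · exact Set.ncard_image_le (hEfin.prod hDfin)
    _ = c (m + 1) * c (m + 1) + 2 * a m * c (m + 1) := by
        rw [ncard_prod, ncard_prod, ncard_prod, ← c_succ,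
          show E.ncard = a m from rfl]
        ring

lemma c_pos : ∀ n : ℕ, 1 ≤ c n := by
  intro n
  induction n with
  | zero => rw [c_zero]
  | succ m ih => calc 1 ≤ c m * c m := Nat.one_le_iff_ne_zero.2 (by positivity)
      _ ≤ c (m + 1) := key_lower m

lemma c_mono_succ (n : ℕ) : c n ≤ c (n + 1) :=
  le_trans (Nat.le_mul_of_pos_left _ (c_pos n)) (key_lower n)

lemma c_mono {m n : ℕ} (h : m ≤ n) : c m ≤ c n := by
  induction h with
  | refl => exact le_rfl
  | step h ih => exact ih.trans (c_mono_succ _)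

lemma c_two_le {n : ℕ} (h : 2 ≤ n) : 2 ≤ c n := le_trans two_le_c_two (c_mono h)

lemma a_le_two_c : ∀ n : ℕ, 1 ≤ n → a n ≤ 2 * c n := by
  intro n
  induction n with
  | zero => omega
  | succ m ih =>
    intro _
    match m, ih with
    | 0, _ => exact a_one_le.trans (by rw [c_one])
    | 1, _ =>
      rw [a_rec 1, show (1 + 1 : ℕ) = 2 from rfl]
      have h2 := two_le_c_two
      have h1 := a_one_le
      omega
    | (k + 2), ih =>
      rw [a_rec (k + 2)]
      have hml : a (k + 2) ≤ 2 * c (k + 2) := ih (by omega)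
      have h2 : 2 ≤ c (k + 2) := c_two_le (by omega)
      have hsq : c (k + 2) * c (k + 2) ≤ c (k + 2 + 1) := key_lower (k + 2)
      have : 2 * c (k + 2) ≤ c (k + 2) * c (k + 2) := by nlinarith
      omega

lemma key_upper' : ∀ n : ℕ, c (n + 2) ≤ c (n + 1) * c (n + 1) + 4 * c n * c (n + 1) := by
  intro n
  refine (key_upper n).trans ?_
  have ha : a n ≤ 2 * c n := by
    cases n with
    | zero => rw [a_zero]; have := c_pos 0; omega
    | succ m => exact a_le_two_c (m + 1) (Nat.succ_le_succ (Nat.zero_le m))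
  have : 2 * a n * c (n + 1) ≤ 4 * c n * c (n + 1) := by
    have : 2 * a n ≤ 4 * c n := by omega
    exact Nat.mul_le_mul_right _ this
  omega

def tt (n : ℕ) : ℝ := Real.log (c n) / 2 ^ n

lemma c_real_pos (n : ℕ) : (0 : ℝ) < (c n : ℝ) := by
  exact_mod_cast c_pos n

lemma c_real_one_le (n : ℕ) : (1 : ℝ) ≤ (c n : ℝ) := by
  exact_mod_cast c_pos n

lemma exp_tt (n : ℕ) : Real.exp ((2 : ℝ) ^ n * tt n) = (c n : ℝ) := by
  rw [tt, mul_div_cancel₀ _ (by positivity : (2 : ℝ) ^ n ≠ 0)]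
  exact Real.exp_log (c_real_pos n)

lemma tt_mono : Monotone tt := by
  apply monotone_nat_of_le_succ
  intro n
  rw [tt, tt, div_le_div_iff₀ (by positivity) (by positivity)]
  have h1 : Real.log (c n) * 2 ≤ Real.log (c (n + 1)) := by
    have : Real.log ((c n : ℝ) * (c n : ℝ)) ≤ Real.log (c (n + 1)) := by
      apply Real.log_le_log (mul_pos (c_real_pos n) (c_real_pos n))
      exact_mod_cast key_lower n
    rwa [Real.log_mul (c_real_pos n).ne' (c_real_pos n).ne', ← two_mul, mul_comm] at this
  calc Real.log (c n) * 2 ^ (n + 1) = Real.log (c n) * 2 * 2 ^ n := by ring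
    _ ≤ Real.log (c (n + 1)) * 2 ^ n := by
        apply mul_le_mul_of_nonneg_right h1 (by positivity)

lemma tt_nonneg (n : ℕ) : 0 ≤ tt n := by
  apply div_nonneg _ (by positivity)
  exact Real.log_nonneg (c_real_one_le n)

lemma tt_step (k : ℕ) : tt (k + 2) ≤ tt (k + 1) + 4 / (2 ^ (k + 2) * c k) := by
  have hck := c_real_pos k
  have hck1 := c_real_pos (k + 1)
  have hck2 := c_real_pos (k + 2)
  have hkl : (c k : ℝ) * c k ≤ c (k + 1) := by exact_mod_cast key_lower k
  have hup : (c (k + 2) : ℝ) ≤ c (k + 1) * c (k + 1) + 4 * c k * c (k + 1) := by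
    exact_mod_cast key_upper' k
  have h2 : (c (k + 2) : ℝ) ≤ c (k + 1) * c (k + 1) * (1 + 4 / c k) := by
    have : (4 : ℝ) * c k * c (k + 1) ≤ c (k + 1) * c (k + 1) * (4 / c k) := by
      rw [mul_comm ((c (k+1) : ℝ) * c (k+1)) _, div_mul_eq_mul_div, le_div_iff₀ hck]
      nlinarith
    nlinarith
  have hlog : Real.log (c (k + 2)) ≤ 2 * Real.log (c (k + 1)) + 4 / c k := by
    have hl1 : Real.log (c (k + 2)) ≤ Real.log ((c (k + 1) : ℝ) * c (k + 1) * (1 + 4 / c k)) :=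
      Real.log_le_log hck2 h2
    rw [Real.log_mul (by positivity) (by positivity),
      Real.log_mul hck1.ne' hck1.ne'] at hl1
    have hl2 : Real.log (1 + 4 / (c k : ℝ)) ≤ 4 / c k := by
      have := Real.log_le_sub_one_of_pos (show (0:ℝ) < 1 + 4 / c k by positivity)
      linarith
    linarith
  have hck' : (0:ℝ) < 2 ^ (k + 2) := by positivity
  calc tt (k + 2) = Real.log (c (k + 2)) / 2 ^ (k + 2) := rfl
    _ ≤ (2 * Real.log (c (k + 1)) + 4 / c k) / 2 ^ (k + 2) := by gcongr
    _ = Real.log (c (k + 1)) / 2 ^ (k + 1) + 4 / (2 ^ (k + 2) * c k) := by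
        field_simp
        ring


lemma tt_tail (j : ℕ) : ∀ m, j + 1 ≤ m →
    tt m ≤ tt (j + 1) + 4 / c j * (1 / 2 ^ (j + 1) - 1 / 2 ^ m) := by
  intro m hm
  induction m, hm using Nat.le_induction with
  | base => simp
  | succ m hm ih =>
    obtain ⟨i, rfl⟩ : ∃ i, m = i + 1 := ⟨m - 1, by omega⟩
    have hstep := tt_step i
    have hcj := c_real_pos j
    have hcj0 : (c j : ℝ) ≠ 0 := hcj.ne'
    have h4 : 4 / (2 ^ (i + 2) * (c i : ℝ)) ≤ 4 / (2 ^ (i + 2) * (c j : ℝ)) := by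
      rw [div_le_div_iff₀ (mul_pos (by positivity) (c_real_pos i)) (mul_pos (by positivity) hcj)]
      have hle : (c j : ℝ) ≤ c i := by exact_mod_cast c_mono (show j ≤ i by omega)
      have hp : (0:ℝ) < 2 ^ (i + 2) := by positivity
      nlinarith
    calc tt (i + 1 + 1) = tt (i + 2) := rfl
      _ ≤ tt (i + 1) + 4 / (2 ^ (i + 2) * c i) := hstep
      _ ≤ (tt (j + 1) + 4 / c j * (1 / 2 ^ (j + 1) - 1 / 2 ^ (i + 1)))
            + 4 / (2 ^ (i + 2) * c j) := by linarith [h4]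
      _ = tt (j + 1) + 4 / c j * (1 / 2 ^ (j + 1) - 1 / 2 ^ (i + 1 + 1)) := by
          field_simp
          ring

lemma tt_le_tail (j m : ℕ) (h : j + 1 ≤ m) :
    tt m ≤ tt (j + 1) + 4 / c j * (1 / 2 ^ (j + 1)) := by
  have := tt_tail j m h
  have hcj := c_real_pos j
  have h2 : (0:ℝ) ≤ 4 / c j * (1 / 2 ^ m) := by positivity
  nlinarith [this]

lemma tt_le_all (j m : ℕ) : tt m ≤ tt (j + 1) + 4 / c j * (1 / 2 ^ (j + 1)) := by
  rcases le_or_gt m (j + 1) with h | h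
  · have h2 : (0:ℝ) ≤ 4 / c j * (1 / 2 ^ (j + 1)) := by positivity
    linarith [tt_mono h]
  · exact tt_le_tail j m h.le

def LL : ℝ := ⨆ n, tt n

lemma tt_bddAbove : BddAbove (Set.range tt) := by
  refine ⟨tt 1 + 4 / c 0 * (1 / 2 ^ 1), ?_⟩
  rintro x ⟨m, rfl⟩
  exact tt_le_all 0 m

lemma tt_le_LL (n : ℕ) : tt n ≤ LL := le_ciSup tt_bddAbove n

lemma LL_le (j : ℕ) : LL ≤ tt (j + 1) + 4 / c j * (1 / 2 ^ (j + 1)) :=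
  ciSup_le fun m => tt_le_all j m

lemma LL_pos : 0 < LL := by
  have h1 : tt 2 ≤ LL := tt_le_LL 2
  have h2 : Real.log 2 / 4 ≤ tt 2 := by
    rw [tt]
    have h3 : (2:ℝ) ≤ (c 2 : ℝ) := by exact_mod_cast two_le_c_two
    have hl : Real.log 2 ≤ Real.log ((c 2 : ℝ)) := Real.log_le_log (by norm_num) h3
    rw [show ((2:ℝ) ^ 2) = 4 by norm_num]
    linarith
  have := Real.log_pos (by norm_num : (1:ℝ) < 2)
  linarith

theorem stmt12 :
    ∃ C : ℝ, 1 < C ∧ ∃ K : ℝ, ∀ n : ℕ,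
      |(c n : ℝ) - C ^ 2 ^ n| ≤ K * C ^ 2 ^ (n - 1) := by
  set C : ℝ := Real.exp LL with hC
  have hC1 : 1 < C := by
    rw [hC, ← Real.exp_zero]
    exact Real.exp_lt_exp.2 LL_pos
  have hC0 : 0 < C := lt_trans one_pos hC1
  set K : ℝ := 20 * Real.exp 4 + C ^ 2 + 1 with hK
  have hK0 : 0 < K := by positivity
  refine ⟨C, hC1, K, ?_⟩
  have hpow : ∀ m : ℕ, C ^ (2 ^ m) = Real.exp ((2:ℝ) ^ m * LL) := by
    intro m
    rw [hC, ← Real.exp_nat_mul]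
    norm_num
  have hcle : ∀ m : ℕ, (c m : ℝ) ≤ C ^ (2 ^ m) := by
    intro m
    rw [hpow m, ← exp_tt m]
    apply Real.exp_le_exp.2
    have h1 := tt_le_LL m
    have h2 : (0:ℝ) ≤ 2 ^ m := by positivity
    nlinarith
  intro n
  match n with
  | 0 =>
    rw [c_zero]
    norm_num
    rw [abs_of_nonpos (by linarith)]
    have hKC : K ≤ K * C := le_mul_of_one_le_right hK0.le hC1.le
    have he4 := Real.exp_pos 4
    nlinarith
  | 1 =>
    rw [c_one]
    norm_num
    rw [abs_of_nonpos (by nlinarith)]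
    have hKC : K ≤ K * C := le_mul_of_one_le_right hK0.le hC1.le
    have he4 := Real.exp_pos 4
    nlinarith
  | (j + 2) =>
    rw [show j + 2 - 1 = j + 1 from rfl]
    have hpos1 : (0:ℝ) < C ^ (2 ^ (j + 1)) := by positivity
    have hcj1 := c_real_pos (j + 1)
    have hLLle := LL_le (j + 1)
    have htle := tt_le_LL (j + 2)
    set δ : ℝ := (2:ℝ) ^ (j + 2) * (LL - tt (j + 2)) with hδdef
    have hδ : δ ≤ 4 / c (j + 1) := by
      have h2 : (0:ℝ) < 2 ^ (j + 2) := by positivity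
      have hsub : LL - tt (j + 2) ≤ 4 / c (j + 1) * (1 / 2 ^ (j + 2)) := by linarith
      calc δ ≤ (2:ℝ) ^ (j + 2) * (4 / c (j + 1) * (1 / 2 ^ (j + 2))) :=
            mul_le_mul_of_nonneg_left hsub h2.le
        _ = 4 / c (j + 1) := by
            field_simp
    have hδ0 : 0 ≤ δ := mul_nonneg (by positivity) (by linarith)
    have hδ4 : δ ≤ 4 := hδ.trans (div_le_self (by norm_num) (c_real_one_le (j + 1)))
    have hsplit : C ^ (2 ^ (j + 2)) = (c (j + 2) : ℝ) * Real.exp δ := by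
      rw [hpow, ← exp_tt (j + 2), ← Real.exp_add]
      congr 1
      ring
    have hexpδ : Real.exp δ - 1 ≤ δ * Real.exp 4 := by
      have h1 := Real.add_one_le_exp (-δ)
      have h2 := Real.exp_pos δ
      have h3 : Real.exp δ ≤ Real.exp 4 := Real.exp_le_exp.2 hδ4
      have h4 : Real.exp (-δ) * Real.exp δ = 1 := by
        rw [← Real.exp_add]
        simp
      nlinarith
    have hc5 : (c (j + 2) : ℝ) ≤ 5 * c (j + 1) * c (j + 1) := by
      have h1 : (c (j + 2) : ℝ) ≤ c (j + 1) * c (j + 1) + 4 * c j * c (j + 1) := by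
        exact_mod_cast key_upper' j
      have h2 : (c j : ℝ) ≤ c (j + 1) := by exact_mod_cast c_mono_succ j
      nlinarith
    have hcnδ : (c (j + 2) : ℝ) * δ ≤ 20 * c (j + 1) := by
      have h1 : (c (j + 2) : ℝ) * δ ≤ (c (j + 2) : ℝ) * (4 / c (j + 1)) :=
        mul_le_mul_of_nonneg_left hδ (c_real_pos _).le
      have h2 : (c (j + 2) : ℝ) * (4 / c (j + 1)) ≤ (5 * c (j + 1) * c (j + 1)) * (4 / c (j + 1)) :=
        mul_le_mul_of_nonneg_right hc5 (by positivity)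
      have h3 : (5 * (c (j + 1) : ℝ) * c (j + 1)) * (4 / c (j + 1)) = 20 * c (j + 1) := by
        field_simp
        ring
      linarith
    have hcj1C : (c (j + 1) : ℝ) ≤ C ^ (2 ^ (j + 1)) := hcle (j + 1)
    have hfin : C ^ (2 ^ (j + 2)) - (c (j + 2) : ℝ) ≤ K * C ^ (2 ^ (j + 1)) := by
      have he : C ^ (2 ^ (j + 2)) - (c (j + 2) : ℝ) = (c (j + 2) : ℝ) * (Real.exp δ - 1) := by
        rw [hsplit]
        ring
      rw [he]
      have h1 : (c (j + 2) : ℝ) * (Real.exp δ - 1) ≤ (c (j + 2) : ℝ) * (δ * Real.exp 4) :=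
        mul_le_mul_of_nonneg_left hexpδ (c_real_pos _).le
      have h3 : ((c (j + 2) : ℝ) * δ) * Real.exp 4 ≤ (20 * c (j + 1)) * Real.exp 4 :=
        mul_le_mul_of_nonneg_right hcnδ (Real.exp_pos 4).le
      have h4 : (20 * (c (j + 1) : ℝ)) * Real.exp 4 ≤ 20 * Real.exp 4 * C ^ (2 ^ (j + 1)) := by
        nlinarith [Real.exp_pos 4]
      have h5 : 20 * Real.exp 4 * C ^ (2 ^ (j + 1)) ≤ K * C ^ (2 ^ (j + 1)) := by
        apply mul_le_mul_of_nonneg_right _ hpos1.le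
        nlinarith [sq_nonneg C]
      nlinarith
    rw [abs_of_nonpos (by linarith [hcle (j + 2)])]
    linarith
end
end
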